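/- arXiv:1809.02680 — 2 statements merged into one kernel-verified Lean document; each statement's English description precedes it below -/
import Mathlib

section
/- Let (Ω, μ) be a probability space, let n ≥ 1 and ρ > 0 be real numbers, let f, k be real numbers with 0 < f ≤ k, let k' ≤ k be a natural number, and let L be a natural number with L ≥ n^ρ · ln(k/f). Suppose for each j ∈ {1, …, k'} the events A_{j,1}, …, A_{j,L} are independent and satisfy μ(A_{j,i}) ≥ n^{−ρ} for every i. Then the probability that there exists some j for which none of A_{j,1}, …, A_{j,L} occurs is at most f: μ(⋃_{j=1}^{k'} (A_{j,1}ᶜ ∩ ⋯ ∩ A_{j,L}ᶜ)) ≤ f. -/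
open MeasureTheory ProbabilityTheory

/-! By independence a ride misses all `L` tables with probability `∏ i, (1 - μ (A j i))`, and
`1 - x ≤ exp (-x)` bounds this by `exp (-n^(-ρ) L) ≤ f / k`; a union bound over the `k' ≤ k`
rides gives `f`. -/

lemma prob_compl_le_exp_neg {Ω : Type*} [MeasurableSpace Ω] {μ : Measure Ω}
    [IsProbabilityMeasure μ] {s : Set Ω} (hs : MeasurableSet s) {p : ℝ}
    (hp : ENNReal.ofReal p ≤ μ s) : μ sᶜ ≤ ENNReal.ofReal (Real.exp (-p)) := by
  have hp_real : p ≤ μ.real s := (ENNReal.ofReal_le_iff_le_toReal (measure_ne_top μ s)).1 hp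
  rw [← ofReal_measureReal, probReal_compl_eq_one_sub hs]
  exact ENNReal.ofReal_le_ofReal <|
    (Real.one_sub_le_exp_neg _).trans (Real.exp_le_exp.2 (neg_le_neg hp_real))

lemma ProbabilityTheory.iIndepSet.measure_iInter_compl_le_exp {Ω ι : Type*} [MeasurableSpace Ω]
    [Fintype ι] {μ : Measure Ω} {s : ι → Set Ω} (hs : ∀ i, MeasurableSet (s i))
    (hindep : iIndepSet s μ) {p : ℝ} (hp : ∀ i, ENNReal.ofReal p ≤ μ (s i)) :
    μ (⋂ i, (s i)ᶜ) ≤ ENNReal.ofReal (Real.exp (-(p * Fintype.card ι))) := by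
  have := hindep.isProbabilityMeasure
  have hcompl : ∀ i, MeasurableSet[MeasurableSpace.generateFrom {s i}] (s i)ᶜ := fun i =>
    (MeasurableSpace.measurableSet_generateFrom (Set.mem_singleton _)).compl
  calc μ (⋂ i, (s i)ᶜ) = ∏ i, μ (s i)ᶜ := iIndep.meas_iInter hindep hcompl
    _ ≤ ∏ _i : ι, ENNReal.ofReal (Real.exp (-p)) :=
      Finset.prod_le_prod' fun i _ => prob_compl_le_exp_neg (hs i) (hp i)
    _ = ENNReal.ofReal (Real.exp (-(p * Fintype.card ι))) := by
      rw [Finset.prod_const, Finset.card_univ, ← ENNReal.ofReal_pow (Real.exp_nonneg _),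
        ← Real.exp_nat_mul, mul_neg, mul_comm]

lemma natCast_mul_exp_neg_le {m : ℕ} {k f x : ℝ} (hf : 0 < f) (hfk : f ≤ k)
    (hm : (m : ℝ) ≤ k) (hx : Real.log (k / f) ≤ x) : m * Real.exp (-x) ≤ f := by
  have hk : 0 < k := hf.trans_le hfk
  calc m * Real.exp (-x) ≤ k * Real.exp (-Real.log (k / f)) := by gcongr
    _ = f := by
      rw [Real.exp_neg, Real.exp_log (div_pos hk hf), inv_div, mul_div_cancel₀ _ hk.ne']

theorem union_none_occurs_prob_le_general {Ω : Type*} [MeasurableSpace Ω]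
    (μ : Measure Ω) [IsProbabilityMeasure μ]
    (n ρ f k : ℝ) (hn : 1 ≤ n) (hf : 0 < f) (hfk : f ≤ k)
    (k' : ℕ) (hk' : (k' : ℝ) ≤ k)
    (L : ℕ) (hL : n ^ ρ * Real.log (k / f) ≤ (L : ℝ))
    (A : Fin k' → Fin L → Set Ω)
    (hA : ∀ j i, MeasurableSet (A j i))
    (hindep : ∀ j, iIndepSet (A j) μ)
    (hge : ∀ j i, ENNReal.ofReal (n ^ (-ρ)) ≤ μ (A j i)) :
    μ (⋃ j, ⋂ i, (A j i)ᶜ) ≤ ENNReal.ofReal f := by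
  have hn0 : 0 < n := one_pos.trans_le hn
  have hlog : Real.log (k / f) ≤ n ^ (-ρ) * L := by
    rw [Real.rpow_neg hn0.le, inv_mul_eq_div, le_div_iff₀ (Real.rpow_pos_of_pos hn0 ρ), mul_comm]
    exact hL
  have hmiss (j) : μ (⋂ i, (A j i)ᶜ) ≤ ENNReal.ofReal (Real.exp (-(n ^ (-ρ) * L))) := by
    simpa using (hindep j).measure_iInter_compl_le_exp (hA j) (hge j)
  calc μ (⋃ j, ⋂ i, (A j i)ᶜ)
    _ ≤ ∑ j, μ (⋂ i, (A j i)ᶜ) := measure_iUnion_fintype_le _ _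
    _ ≤ ∑ _j : Fin k', ENNReal.ofReal (Real.exp (-(n ^ (-ρ) * L))) :=
      Finset.sum_le_sum fun j _ => hmiss j
    _ = ENNReal.ofReal (k' * Real.exp (-(n ^ (-ρ) * L))) := by
      rw [Finset.sum_const, Finset.card_univ, Fintype.card_fin, nsmul_eq_mul,
        ENNReal.ofReal_mul (Nat.cast_nonneg _), ENNReal.ofReal_natCast]
    _ ≤ ENNReal.ofReal f :=
      ENNReal.ofReal_le_ofReal (natCast_mul_exp_neg_le hf hfk hk' hlog)

/-- With L ≥ n^ρ · ln(k/f) hash tables and k' ≤ k similar rides,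
each colliding with the query in each table independently with probability at
least n^(−ρ), the probability that some similar ride collides in none of the
tables is at most f. -/
theorem union_none_occurs_prob_le {Ω : Type*} [MeasurableSpace Ω]
    (μ : Measure Ω) [IsProbabilityMeasure μ]
    (n ρ f k : ℝ) (hn : 1 ≤ n) (hρ : 0 < ρ) (hf : 0 < f) (hfk : f ≤ k)
    (k' : ℕ) (hk' : (k' : ℝ) ≤ k)
    (L : ℕ) (hL : n ^ ρ * Real.log (k / f) ≤ (L : ℝ))
    (A : Fin k' → Fin L → Set Ω)
    (hA : ∀ j i, MeasurableSet (A j i))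
    (hindep : ∀ j, iIndepSet (A j) μ)
    (hge : ∀ j i, ENNReal.ofReal (n ^ (-ρ)) ≤ μ (A j i)) :
    μ (⋃ j, ⋂ i, (A j i)ᶜ) ≤ ENNReal.ofReal f :=
  union_none_occurs_prob_le_general μ n ρ f k hn hf hfk k' hk' L hL A hA hindep hge
end

section
/- Let d ∈ ℕ, m ≥ 1 a natural number, q, x ∈ ℝ^d with q ≠ 0. Then the cosine similarity of the transformed vectors satisfies ⟨Q(q), P(x)⟩ / (‖Q(q)‖₂ · ‖P(x)‖₂) = ⟨q, x⟩ / (‖q‖₂ · √(m/4 + ‖x‖₂^{2^{m+1}})). -/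
open scoped RealInnerProductSpace

/-- The preprocessing transformation P : ℝ^d → ℝ^{d+m},
P(x) = [x; 1/2 − ‖x‖₂^{2^1}; 1/2 − ‖x‖₂^{2^2}; …; 1/2 − ‖x‖₂^{2^m}]. -/
noncomputable def preprocess (d m : ℕ) (x : EuclideanSpace ℝ (Fin d)) :
    EuclideanSpace ℝ (Fin (d + m)) :=
  WithLp.toLp 2 fun i => if h : (i : ℕ) < d then x ⟨i, h⟩
    else 1 / 2 - ‖x‖ ^ (2 ^ ((i : ℕ) - d + 1))

/-- The query transformation Q : ℝ^d → ℝ^{d+m}, Q(x) = [x; 0; …; 0]. -/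
noncomputable def query (d m : ℕ) (x : EuclideanSpace ℝ (Fin d)) :
    EuclideanSpace ℝ (Fin (d + m)) :=
  WithLp.toLp 2 fun i => if h : (i : ℕ) < d then x ⟨i, h⟩ else 0

/-! Squaring an appended coordinate `1/2 - ‖x‖^(2^i)` gives `1/4 - ‖x‖^(2^i) + ‖x‖^(2^(i+1))`, so the
squared norm of `P(x)` telescopes to `‖x‖² + m/4 + ‖x‖^(2^(m+1)) - ‖x‖²`; the query `Q(q)` vanishes on the
appended coordinates, so it sees only the `x`-block of `P(x)` and has the norm of `q`. -/

theorem sum_range_sq_half_sub_pow_two_pow {K : Type*} [Field K] [CharZero K] (a : K) (m : ℕ) :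
    ∑ i ∈ Finset.range m, (1 / 2 - a ^ 2 ^ (i + 1)) ^ 2 = m / 4 + a ^ 2 ^ (m + 1) - a ^ 2 := by
  induction m with
  | zero => simp
  | succ m ih =>
    rw [Finset.sum_range_succ, ih, pow_succ 2 (m + 1), pow_mul]
    push_cast
    field_simp
    ring

section Coordinates

variable {d m : ℕ} (x : EuclideanSpace ℝ (Fin d))

@[simp]
theorem preprocess_castAdd (i : Fin d) : preprocess d m x (Fin.castAdd m i) = x i := by
  simp [preprocess]

@[simp]
theorem preprocess_natAdd (i : Fin m) :
    preprocess d m x (Fin.natAdd d i) = 1 / 2 - ‖x‖ ^ 2 ^ ((i : ℕ) + 1) := by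
  simp [preprocess]

@[simp]
theorem query_castAdd (i : Fin d) : query d m x (Fin.castAdd m i) = x i := by
  simp [query]

@[simp]
theorem query_natAdd (i : Fin m) : query d m x (Fin.natAdd d i) = 0 := by
  simp [query]

end Coordinates

theorem inner_query_preprocess (d m : ℕ) (q x : EuclideanSpace ℝ (Fin d)) :
    ⟪query d m q, preprocess d m x⟫ = ⟪q, x⟫ := by
  simp [PiLp.inner_apply, Fin.sum_univ_add]

theorem norm_query (d m : ℕ) (q : EuclideanSpace ℝ (Fin d)) : ‖query d m q‖ = ‖q‖ := by
  simp [EuclideanSpace.norm_eq, Fin.sum_univ_add]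

theorem norm_sq_preprocess (d m : ℕ) (x : EuclideanSpace ℝ (Fin d)) :
    ‖preprocess d m x‖ ^ 2 = m / 4 + ‖x‖ ^ 2 ^ (m + 1) := by
  rw [EuclideanSpace.norm_sq_eq, Fin.sum_univ_add]
  simp only [preprocess_castAdd, preprocess_natAdd]
  rw [← EuclideanSpace.norm_sq_eq x,
    Fin.sum_univ_eq_sum_range (fun i => ‖1 / 2 - ‖x‖ ^ 2 ^ (i + 1)‖ ^ 2)]
  simp only [Real.norm_eq_abs, sq_abs]
  rw [sum_range_sq_half_sub_pow_two_pow]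
  ring

theorem norm_preprocess (d m : ℕ) (x : EuclideanSpace ℝ (Fin d)) :
    ‖preprocess d m x‖ = √(m / 4 + ‖x‖ ^ 2 ^ (m + 1)) := by
  rw [← norm_sq_preprocess, Real.sqrt_sq (norm_nonneg _)]

theorem cosine_similarity_transformed_general (d m : ℕ)
    (q x : EuclideanSpace ℝ (Fin d)) :
    ⟪query d m q, preprocess d m x⟫ / (‖query d m q‖ * ‖preprocess d m x‖) =
      ⟪q, x⟫ / (‖q‖ * Real.sqrt ((m : ℝ) / 4 + ‖x‖ ^ (2 ^ (m + 1)))) := by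
  rw [inner_query_preprocess, norm_query, norm_preprocess]

/-- for m ≥ 1 and q ≠ 0, the cosine similarity of the
transformed vectors equals ⟨q, x⟩ / (‖q‖₂ · √(m/4 + ‖x‖₂^{2^{m+1}})). -/
theorem cosine_similarity_transformed (d m : ℕ) (hm : 1 ≤ m)
    (q x : EuclideanSpace ℝ (Fin d)) (hq : q ≠ 0) :
    ⟪query d m q, preprocess d m x⟫ / (‖query d m q‖ * ‖preprocess d m x‖) =
      ⟪q, x⟫ / (‖q‖ * Real.sqrt ((m : ℝ) / 4 + ‖x‖ ^ (2 ^ (m + 1)))) :=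
  cosine_similarity_transformed_general d m q x
end
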